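/- arXiv:2007.05852 — 3 statements merged into one kernel-verified Lean document; each statement's English description precedes it below -/
import Mathlib

section
/- Let f₁, ..., f_m : 2^V → ℝ≥0 be monotone submodular. Define OPT = max over sets S_tr of size at most l and S₁,...,S_m each of size at most k-l of Σᵢ fᵢ(S_tr ∪ Sᵢ). Let (S_tr, S₁, ..., S_m) be the output of Algorithm 1 (greedy on the sum Σfᵢ for l rounds to build S_tr, then greedy on each fᵢ for k-l rounds to build Sᵢ on top of S_tr), and set β = Σᵢ fᵢ(S_tr). Then Σᵢ fᵢ(S_tr ∪ Sᵢ) ≥ max{ β, (1 - 1/e)(OPT - 2β) + β }. -/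
/-!
Let `β = Σᵢ fᵢ(S_tr)`. Each greedy step of phase 1 gains at least the marginal gain of any
element `e` with respect to the final `S_tr` (diminishing returns), and these `l` gains telescope
to at most `β`; so every element gains at most `β / l` on top of `S_tr`, and adding any set of
at most `l` elements gains at most `β`. Hence `OPT ≤ ρ + β`, where `ρ = Σᵢ fᵢ(S_tr ∪ S'ᵢ)` for an
optimal `(S'_tr, S')`. Phase 2 is the classical greedy algorithm for `X ↦ fᵢ(S_tr ∪ X)`, which
in `T = k - l` steps closes all but a fraction `(1 - 1/T)^T ≤ 1/e` of the gap
`fᵢ(S_tr ∪ S'ᵢ) - fᵢ(S_tr)`, giving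
`Σᵢ fᵢ(S_tr ∪ Sᵢ) ≥ (1 - 1/e)(ρ - β) + β ≥ (1 - 1/e)(OPT - 2β) + β`.
-/

open Finset

def Submodular {V : Type*} [DecidableEq V] (f : Finset V → ℝ) : Prop :=
  ∀ A B : Finset V, f (A ∪ B) + f (A ∩ B) ≤ f A + f B

def MonotoneSet {V : Type*} (f : Finset V → ℝ) : Prop :=
  ∀ A B : Finset V, A ⊆ B → f A ≤ f B

def marginal {V : Type*} [DecidableEq V] (f : Finset V → ℝ) (e : V) (A : Finset V) : ℝ :=
  f (insert e A) - f A

section SetFunction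

variable {V : Type*} [DecidableEq V] {f : Finset V → ℝ}

/-- Monotonicity is needed for `e ∈ B`, where the left side vanishes. -/
theorem Submodular.marginal_le_of_subset (hs : Submodular f) (hm : MonotoneSet f)
    {A B : Finset V} (hAB : A ⊆ B) (e : V) : marginal f e B ≤ marginal f e A := by
  have hsub := hs (insert e A) B
  rw [insert_union, union_eq_right.mpr hAB] at hsub
  have hinter : f A ≤ f (insert e A ∩ B) :=
    hm _ _ (subset_inter (subset_insert e A) hAB)
  unfold marginal
  linarith

theorem Submodular.sub_le_sum_marginal (hs : Submodular f) (hm : MonotoneSet f)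
    (A O : Finset V) : f (A ∪ O) - f A ≤ ∑ e ∈ O, marginal f e A := by
  induction O using Finset.induction_on with
  | empty => simp
  | insert e O he ih =>
    rw [sum_insert he, union_insert]
    have : f (insert e (A ∪ O)) - f (A ∪ O) ≤ marginal f e A :=
      hs.marginal_le_of_subset hm subset_union_left e
    linarith

theorem Submodular.le_add_sum_marginal (hs : Submodular f) (hm : MonotoneSet f)
    (A P Q : Finset V) : f (P ∪ Q) ≤ f (A ∪ Q) + ∑ e ∈ P, marginal f e A := by
  have hmono : f (P ∪ Q) ≤ f ((A ∪ Q) ∪ P) := hm _ _ (by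
    rw [union_comm P Q]; exact union_subset_union subset_union_right subset_rfl)
  have hgain := hs.sub_le_sum_marginal hm (A ∪ Q) P
  have hdim : ∑ e ∈ P, marginal f e (A ∪ Q) ≤ ∑ e ∈ P, marginal f e A :=
    sum_le_sum fun e _ => hs.marginal_le_of_subset hm subset_union_left e
  linarith

theorem Submodular.union_left (hs : Submodular f) (B : Finset V) :
    Submodular fun X => f (B ∪ X) := by
  intro X Y
  have := hs (B ∪ X) (B ∪ Y)
  rwa [← union_union_distrib_left, ← union_inter_distrib_left] at this

theorem MonotoneSet.union_left (hm : MonotoneSet f) (B : Finset V) :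
    MonotoneSet fun X => f (B ∪ X) :=
  fun _ _ hXY => hm _ _ (union_subset_union subset_rfl hXY)

end SetFunction

section Sum

variable {ι V : Type*} {f : ι → Finset V → ℝ} (s : Finset ι)

theorem Submodular.sum [DecidableEq V] (hs : ∀ i ∈ s, Submodular (f i)) :
    Submodular fun X => ∑ i ∈ s, f i X := by
  intro A B
  rw [← sum_add_distrib, ← sum_add_distrib]
  exact sum_le_sum fun i hi => hs i hi A B

theorem MonotoneSet.sum (hm : ∀ i ∈ s, MonotoneSet (f i)) :
    MonotoneSet fun X => ∑ i ∈ s, f i X :=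
  fun A B hAB => sum_le_sum fun i hi => hm i hi A B hAB

theorem marginal_sum [DecidableEq V] (e : V) (A : Finset V) :
    marginal (fun X => ∑ i ∈ s, f i X) e A = ∑ i ∈ s, marginal (f i) e A := by
  simp only [marginal, sum_sub_distrib]

theorem sum_le_sum_union_add_sum_marginal [DecidableEq V] (hs : ∀ i ∈ s, Submodular (f i))
    (hm : ∀ i ∈ s, MonotoneSet (f i)) (A P : Finset V) (Q : ι → Finset V) :
    ∑ i ∈ s, f i (P ∪ Q i) ≤
      ∑ i ∈ s, f i (A ∪ Q i) + ∑ e ∈ P, marginal (fun X => ∑ i ∈ s, f i X) e A := by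
  simp_rw [marginal_sum]
  rw [sum_comm, ← sum_add_distrib]
  exact sum_le_sum fun i hi => (hs i hi).le_add_sum_marginal (hm i hi) A P (Q i)

end Sum

structure IsGreedyRun {V : Type*} [DecidableEq V] (g : Finset V → ℝ) (T : ℕ)
    (S : ℕ → Finset V) : Prop where
  start : S 0 = ∅
  step : ∀ t < T, ∃ e, S (t + 1) = insert e (S t) ∧
    ∀ e', marginal g e' (S t) ≤ marginal g e (S t)

namespace IsGreedyRun

variable {V : Type*} [DecidableEq V] {g : Finset V → ℝ} {T : ℕ} {S : ℕ → Finset V}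

theorem marginal_le_gain (hrun : IsGreedyRun g T S) {t : ℕ} (ht : t < T) (e : V) :
    marginal g e (S t) ≤ g (S (t + 1)) - g (S t) := by
  obtain ⟨e₀, hnext, hbest⟩ := hrun.step t ht
  rw [hnext]
  exact hbest e

theorem subset (hrun : IsGreedyRun g T S) {s t : ℕ} (hst : s ≤ t) (ht : t ≤ T) :
    S s ⊆ S t := by
  induction t, hst using Nat.le_induction with
  | base => exact subset_rfl
  | succ t _ ih =>
    obtain ⟨e, hnext, -⟩ := hrun.step t ht
    rw [hnext]
    exact (ih (by omega)).trans (subset_insert e _)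

variable (hs : Submodular g) (hm : MonotoneSet g)
include hs hm

theorem mul_marginal_le (hrun : IsGreedyRun g T S) (e : V) :
    T * marginal g e (S T) ≤ g (S T) - g ∅ := by
  have hstep : ∀ t ∈ range T, marginal g e (S T) ≤ g (S (t + 1)) - g (S t) := fun t ht =>
    (hs.marginal_le_of_subset hm (hrun.subset (mem_range.mp ht).le le_rfl) e).trans
      (hrun.marginal_le_gain (mem_range.mp ht) e)
  have := sum_le_sum hstep
  rwa [sum_const, card_range, nsmul_eq_mul, sum_range_sub (fun t => g (S t)),
    hrun.start] at this

theorem sum_marginal_le (hrun : IsGreedyRun g T S) {O : Finset V} (hO : O.card ≤ T) :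
    ∑ e ∈ O, marginal g e (S T) ≤ g (S T) - g ∅ := by
  rcases Nat.eq_zero_or_pos T with rfl | hT
  · simp [card_eq_zero.mp (Nat.le_zero.mp hO), hrun.start]
  have hT' : (0 : ℝ) < T := by exact_mod_cast hT
  have hgain : 0 ≤ g (S T) - g ∅ := by
    rw [← hrun.start]
    exact sub_nonneg.mpr (hm _ _ (hrun.subset T.zero_le le_rfl))
  calc ∑ e ∈ O, marginal g e (S T) ≤ O.card • ((g (S T) - g ∅) / T) :=
        sum_le_card_nsmul _ _ _ fun e _ => by
          rw [le_div_iff₀' hT']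
          exact hrun.mul_marginal_le hs hm e
    _ ≤ T * ((g (S T) - g ∅) / T) := by
        rw [nsmul_eq_mul]
        gcongr
    _ = g (S T) - g ∅ := by field_simp

theorem sub_le_mul_gain (hrun : IsGreedyRun g T S) {t : ℕ} (ht : t < T) {O : Finset V}
    (hO : O.card ≤ T) : g O - g (S t) ≤ T * (g (S (t + 1)) - g (S t)) := by
  have hgain : 0 ≤ g (S (t + 1)) - g (S t) :=
    sub_nonneg.mpr (hm _ _ (hrun.subset t.le_succ ht))
  calc g O - g (S t) ≤ g (S t ∪ O) - g (S t) := by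
        gcongr
        exact hm _ _ subset_union_right
    _ ≤ ∑ e ∈ O, marginal g e (S t) := hs.sub_le_sum_marginal hm _ _
    _ ≤ O.card • (g (S (t + 1)) - g (S t)) :=
        sum_le_card_nsmul _ _ _ fun e _ => hrun.marginal_le_gain ht e
    _ ≤ T * (g (S (t + 1)) - g (S t)) := by
        rw [nsmul_eq_mul]
        gcongr

theorem sub_succ_le (hrun : IsGreedyRun g T S) {t : ℕ} (ht : t < T) {O : Finset V}
    (hO : O.card ≤ T) : g O - g (S (t + 1)) ≤ (1 - 1 / T) * (g O - g (S t)) := by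
  have hT : (0 : ℝ) < T := by exact_mod_cast t.zero_le.trans_lt ht
  have hstep : (g O - g (S t)) / T ≤ g (S (t + 1)) - g (S t) := by
    rw [div_le_iff₀' hT]
    exact hrun.sub_le_mul_gain hs hm ht hO
  linarith [show (1 - 1 / (T : ℝ)) * (g O - g (S t)) = g O - g (S t) - (g O - g (S t)) / T by
    ring]

theorem sub_le_pow_mul (hrun : IsGreedyRun g T S) {O : Finset V} (hO : O.card ≤ T) {t : ℕ}
    (ht : t ≤ T) : g O - g (S t) ≤ (1 - 1 / T) ^ t * (g O - g ∅) := by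
  induction t with
  | zero => simp [hrun.start]
  | succ t ih =>
    have hT : (1 : ℝ) ≤ T := by exact_mod_cast (show 1 ≤ T by omega)
    have hrate : 0 ≤ 1 - 1 / (T : ℝ) := sub_nonneg.mpr (div_le_one_of_le₀ hT (by positivity))
    calc g O - g (S (t + 1)) ≤ (1 - 1 / T) * (g O - g (S t)) :=
          hrun.sub_succ_le hs hm (by omega) hO
      _ ≤ (1 - 1 / T) * ((1 - 1 / T) ^ t * (g O - g ∅)) := by
          gcongr
          exact ih (by omega)
      _ = (1 - 1 / T) ^ (t + 1) * (g O - g ∅) := by ring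

theorem sub_le_exp_neg_one_mul (hrun : IsGreedyRun g T S) {O : Finset V} (hO : O.card ≤ T) :
    g O - g (S T) ≤ Real.exp (-1) * (g O - g ∅) := by
  rcases Nat.eq_zero_or_pos T with rfl | hT
  · simp [card_eq_zero.mp (Nat.le_zero.mp hO), hrun.start]
  have hT' : (1 : ℝ) ≤ T := by exact_mod_cast hT
  calc g O - g (S T) ≤ (1 - 1 / T) ^ T * (g O - g ∅) := hrun.sub_le_pow_mul hs hm hO le_rfl
    _ ≤ Real.exp (-1) * (g O - g ∅) := by
        gcongr
        · exact sub_nonneg.mpr (hm _ _ (empty_subset O))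
        · exact Real.one_sub_div_pow_le_exp_neg hT'

end IsGreedyRun

theorem algorithm1_guarantee_general {V : Type*} [DecidableEq V]
    (m k l : ℕ)
    (f : Fin m → Finset V → ℝ)
    (hnonneg : ∀ i S, 0 ≤ f i S)
    (hsub : ∀ i, Submodular (f i)) (hmono : ∀ i, MonotoneSet (f i))
    (OPT : ℝ)
    (hOPT : IsGreatest {v : ℝ | ∃ (Str' : Finset V) (S' : Fin m → Finset V),
      Str'.card ≤ l ∧ (∀ i, (S' i).card ≤ k - l) ∧
      v = ∑ i, f i (Str' ∪ S' i)} OPT)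
    -- phase 1: greedy on the sum
    (Str : ℕ → Finset V) (hStr0 : Str 0 = ∅)
    (hStrStep : ∀ t < l, ∃ e, e ∉ Str t ∧ Str (t + 1) = insert e (Str t) ∧
      ∀ e', (∑ i, (f i (insert e' (Str t)) - f i (Str t))) ≤
        ∑ i, (f i (insert e (Str t)) - f i (Str t)))
    -- phase 2: greedy on each fᵢ on top of Str l
    (S : Fin m → ℕ → Finset V) (hS0 : ∀ i, S i 0 = ∅)
    (hSStep : ∀ i, ∀ t < k - l, ∃ e, e ∉ Str l ∪ S i t ∧
      S i (t + 1) = insert e (S i t) ∧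
      ∀ e', f i (Str l ∪ insert e' (S i t)) - f i (Str l ∪ S i t) ≤
        f i (Str l ∪ insert e (S i t)) - f i (Str l ∪ S i t))
    (β : ℝ) (hβ : β = ∑ i, f i (Str l)) :
    max β ((1 - 1 / Real.exp 1) * (OPT - 2 * β) + β) ≤
      ∑ i, f i (Str l ∪ S i (k - l)) := by
  obtain ⟨Str', S', hStr', hS', rfl⟩ := hOPT.1
  have phase1 : IsGreedyRun (fun X => ∑ i, f i X) l Str := ⟨hStr0, fun t ht => by
    obtain ⟨e, -, hnext, hbest⟩ := hStrStep t ht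
    exact ⟨e, hnext, fun e' => by simpa only [marginal, sum_sub_distrib] using hbest e'⟩⟩
  have phase2 (i : Fin m) : IsGreedyRun (fun X => f i (Str l ∪ X)) (k - l) (S i) :=
    ⟨hS0 i, fun t ht => by
      obtain ⟨e, -, hnext, hbest⟩ := hSStep i t ht
      exact ⟨e, hnext, hbest⟩⟩
  have hopt : ∑ i, f i (Str' ∪ S' i) ≤ ∑ i, f i (Str l ∪ S' i) + β := by
    have hsplit := sum_le_sum_union_add_sum_marginal univ (fun i _ => hsub i)
      (fun i _ => hmono i) (Str l) Str' S'
    have hgain := phase1.sum_marginal_le (Submodular.sum univ fun i _ => hsub i)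
      (MonotoneSet.sum univ fun i _ => hmono i) hStr'
    have hempty : 0 ≤ ∑ i, f i ∅ := sum_nonneg fun i _ => hnonneg i ∅
    linarith
  have hgreedy : ∑ i, f i (Str l ∪ S' i) - ∑ i, f i (Str l ∪ S i (k - l)) ≤
      Real.exp (-1) * (∑ i, f i (Str l ∪ S' i) - β) := by
    rw [hβ, ← sum_sub_distrib, ← sum_sub_distrib, mul_sum]
    refine sum_le_sum fun i _ => ?_
    simpa only [union_empty] using (phase2 i).sub_le_exp_neg_one_mul ((hsub i).union_left _)
      ((hmono i).union_left _) (hS' i)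
  have hβle : β ≤ ∑ i, f i (Str l ∪ S i (k - l)) :=
    hβ ▸ sum_le_sum fun i _ => hmono i _ _ subset_union_left
  have hrate : 0 ≤ 1 - Real.exp (-1) := sub_nonneg.mpr (Real.exp_le_one_iff.mpr (by norm_num))
  rw [one_div, ← Real.exp_neg]
  refine max_le hβle ?_
  calc (1 - Real.exp (-1)) * (∑ i, f i (Str' ∪ S' i) - 2 * β) + β
      ≤ (1 - Real.exp (-1)) * (∑ i, f i (Str l ∪ S' i) - β) + β :=
        (add_le_add_iff_right β).mpr (mul_le_mul_of_nonneg_left (by linarith) hrate)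
    _ ≤ ∑ i, f i (Str l ∪ S i (k - l)) := by linarith

/-- Proposition 1: guarantee for Algorithm 1, which first builds
`S_tr` greedily on the sum `Σᵢ fᵢ` for `l` rounds and then builds each `Sᵢ`
greedily on `fᵢ` on top of `S_tr` for `k - l` rounds. -/
theorem algorithm1_guarantee {V : Type*} [Fintype V] [DecidableEq V]
    (m k l : ℕ) (hlk : l ≤ k)
    (f : Fin m → Finset V → ℝ)
    (hnonneg : ∀ i S, 0 ≤ f i S)
    (hsub : ∀ i, Submodular (f i)) (hmono : ∀ i, MonotoneSet (f i))
    (OPT : ℝ)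
    (hOPT : IsGreatest {v : ℝ | ∃ (Str' : Finset V) (S' : Fin m → Finset V),
      Str'.card ≤ l ∧ (∀ i, (S' i).card ≤ k - l) ∧
      v = ∑ i, f i (Str' ∪ S' i)} OPT)
    -- phase 1: greedy on the sum
    (Str : ℕ → Finset V) (hStr0 : Str 0 = ∅)
    (hStrStep : ∀ t < l, ∃ e, e ∉ Str t ∧ Str (t + 1) = insert e (Str t) ∧
      ∀ e', (∑ i, (f i (insert e' (Str t)) - f i (Str t))) ≤
        ∑ i, (f i (insert e (Str t)) - f i (Str t)))
    -- phase 2: greedy on each fᵢ on top of Str l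
    (S : Fin m → ℕ → Finset V) (hS0 : ∀ i, S i 0 = ∅)
    (hSStep : ∀ i, ∀ t < k - l, ∃ e, e ∉ Str l ∪ S i t ∧
      S i (t + 1) = insert e (S i t) ∧
      ∀ e', f i (Str l ∪ insert e' (S i t)) - f i (Str l ∪ S i t) ≤
        f i (Str l ∪ insert e (S i t)) - f i (Str l ∪ S i t))
    (β : ℝ) (hβ : β = ∑ i, f i (Str l)) :
    max β ((1 - 1 / Real.exp 1) * (OPT - 2 * β) + β) ≤
      ∑ i, f i (Str l ∪ S i (k - l)) :=
  algorithm1_guarantee_general m k l f hnonneg hsub hmono OPT hOPT Str hStr0 hStrStep S hS0 hSStep β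
    hβ
end

section
/- Let f₁, ..., f_m : 2^V → ℝ≥0 be monotone submodular. Define OPT = max over sets S_tr of size at most l and S₁,...,S_m each of size at most k-l of Σᵢ fᵢ(S_tr ∪ Sᵢ). Let (S_tr, S₁, ..., S_m) be the output of Algorithm 2 (greedy on each fᵢ for k-l rounds to build Sᵢ, then greedy on Σᵢ fᵢ(· ∪ Sᵢ) for l rounds to build S_tr), and set γ = Σᵢ fᵢ(Sᵢ). Then Σᵢ fᵢ(S_tr ∪ Sᵢ) ≥ max{ γ, (1 - 1/e)(OPT - 2γ) + γ }. -/
open Finset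

/-!
Phase 2 runs the greedy algorithm on the monotone submodular function `G T = ∑ i, fᵢ (T ∪ Sᵢ)`
from a set with `G ≥ G ∅ = γ`, so it gains at least `(1 - 1/e)` times what any `T'` with
`#T' ≤ l` would add. Phase 1 is greedy too, so no set of size `k - l` adds more than `fᵢ Sᵢ` to
`fᵢ Sᵢ`; by submodularity an optimal `(T', S')` therefore has `OPT ≤ G T' + γ`.
-/

section SetFunction

variable {V : Type*} {g : Finset V → ℝ}

theorem MonotoneSet.sum_s6 {ι : Type*} [Fintype ι] {f : ι → Finset V → ℝ}
    (hmono : ∀ i, MonotoneSet (f i)) : MonotoneSet (fun T => ∑ i, f i T) :=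
  fun A B hAB => sum_le_sum fun i _ => hmono i A B hAB

variable [DecidableEq V]

theorem MonotoneSet.union_right (hmono : MonotoneSet g) (S : Finset V) :
    MonotoneSet (fun T => g (T ∪ S)) :=
  fun _ _ hAB => hmono _ _ (union_subset_union_left hAB)

theorem Submodular.union_right (hsub : Submodular g) (S : Finset V) :
    Submodular (fun T => g (T ∪ S)) := by
  intro A B
  simpa only [← union_union_distrib_right, ← inter_union_distrib_right] using
    hsub (A ∪ S) (B ∪ S)

theorem Submodular.sum_s6 {ι : Type*} [Fintype ι] {f : ι → Finset V → ℝ}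
    (hsub : ∀ i, Submodular (f i)) : Submodular (fun T => ∑ i, f i T) := by
  intro A B
  simp only [← sum_add_distrib]
  exact sum_le_sum fun i _ => hsub i A B

theorem Submodular.add_le_union_add_union (hsub : Submodular g) (hmono : MonotoneSet g)
    (A B S : Finset V) : g (A ∪ B) + g S ≤ g (A ∪ S) + g (B ∪ S) := by
  have h := hsub (A ∪ S) (B ∪ S)
  have hunion := hmono (A ∪ B) ((A ∪ S) ∪ (B ∪ S))
    (union_subset_union subset_union_left subset_union_left)
  have hinter := hmono S ((A ∪ S) ∩ (B ∪ S)) (subset_inter subset_union_right subset_union_right)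
  linarith

theorem Submodular.union_sub_le_union_sub (hsub : Submodular g) (hmono : MonotoneSet g)
    (C : Finset V) {T T' : Finset V} (hTT' : T ⊆ T') :
    g (C ∪ T') - g T' ≤ g (C ∪ T) - g T := by
  have h := hsub (C ∪ T) T'
  rw [union_assoc, union_eq_right.2 hTT'] at h
  have hinter := hmono T ((C ∪ T) ∩ T') (subset_inter subset_union_right hTT')
  linarith

theorem Submodular.union_sub_le_sum (hsub : Submodular g) (hmono : MonotoneSet g)
    (C T : Finset V) : g (C ∪ T) - g T ≤ ∑ e ∈ C, (g (insert e T) - g T) := by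
  induction C using Finset.induction_on with
  | empty => simp
  | insert a C ha ih =>
    have h := hsub.union_sub_le_union_sub hmono {a} (subset_union_right : T ⊆ C ∪ T)
    rw [singleton_union, singleton_union] at h
    rw [sum_insert ha, insert_union]
    linarith

end SetFunction

def IsGreedyChain {V : Type*} [DecidableEq V] (g : Finset V → ℝ) (T : ℕ → Finset V) (L : ℕ) :
    Prop :=
  ∀ t < L, ∃ e, T (t + 1) = insert e (T t) ∧
    ∀ e', g (insert e' (T t)) - g (T t) ≤ g (insert e (T t)) - g (T t)

namespace IsGreedyChain

variable {V : Type*} [DecidableEq V] {g : Finset V → ℝ} {T : ℕ → Finset V} {L : ℕ}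

theorem subset (hT : IsGreedyChain g T L) {s t : ℕ} (hst : s ≤ t) (htL : t ≤ L) :
    T s ⊆ T t := by
  induction t, hst using Nat.le_induction with
  | base => exact Subset.rfl
  | succ t _ ih =>
    obtain ⟨e, he, -⟩ := hT t htL
    exact (ih (t.le_succ.trans htL)).trans (he ▸ subset_insert e (T t))

theorem union_sub_le_card_mul (hT : IsGreedyChain g T L) (hsub : Submodular g)
    (hmono : MonotoneSet g) (C : Finset V) {t : ℕ} (ht : t < L) :
    g (C ∪ T t) - g (T t) ≤ #C * (g (T (t + 1)) - g (T t)) := by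
  obtain ⟨e, he, hmax⟩ := hT t ht
  rw [he, ← nsmul_eq_mul]
  exact (hsub.union_sub_le_sum hmono C (T t)).trans (sum_le_card_nsmul _ _ _ fun e' _ => hmax e')

/-- At round `t` the gain of `C` over `T L` is at most its gain over `T t`, hence at most `#C`
times the gain of that round; summing over the `L` rounds gives the bound. -/
theorem union_sub_le_sub (hT : IsGreedyChain g T L) (hsub : Submodular g)
    (hmono : MonotoneSet g) {C : Finset V} (hC : #C ≤ L) :
    g (C ∪ T L) - g (T L) ≤ g (T L) - g (T 0) := by
  have hround : ∀ t ∈ range L, g (C ∪ T L) - g (T L) ≤ #C * (g (T (t + 1)) - g (T t)) :=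
    fun t ht => (hsub.union_sub_le_union_sub hmono C (hT.subset (mem_range.1 ht).le le_rfl)).trans
      (hT.union_sub_le_card_mul hsub hmono C (mem_range.1 ht))
  have hsum := sum_le_sum hround
  rw [sum_const, card_range, nsmul_eq_mul, ← mul_sum, sum_range_sub (fun t => g (T t))] at hsum
  have hgain : 0 ≤ g (T L) - g (T 0) := sub_nonneg.2 (hmono _ _ (hT.subset L.zero_le le_rfl))
  rcases L.eq_zero_or_pos with rfl | hL
  · simp [card_eq_zero.1 (Nat.le_zero.1 hC)]
  · refine le_of_mul_le_mul_left (hsum.trans ?_) (Nat.cast_pos.2 hL : (0 : ℝ) < L)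
    exact mul_le_mul_of_nonneg_right (by exact_mod_cast hC) hgain

theorem one_sub_exp_neg_one_mul_le (hT : IsGreedyChain g T L) (hsub : Submodular g)
    (hmono : MonotoneSet g) {C : Finset V} (hC : #C ≤ L) :
    (1 - Real.exp (-1)) * (g C - g (T 0)) ≤ g (T L) - g (T 0) := by
  have hgain : 0 ≤ g (T L) - g (T 0) := sub_nonneg.2 (hmono _ _ (hT.subset L.zero_le le_rfl))
  have hexp : 0 ≤ 1 - Real.exp (-1) := sub_nonneg.2 (Real.exp_le_one_iff.2 (by norm_num))
  by_cases hC0 : g C ≤ g (T 0)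
  · nlinarith
  have hL : (0 : ℝ) < L := by
    refine Nat.cast_pos.2 (Nat.pos_of_ne_zero fun hL0 => hC0 ?_)
    rw [card_eq_zero.1 (Nat.le_zero.1 (hC.trans hL0.le))]
    exact hmono _ _ (empty_subset _)
  set d : ℕ → ℝ := fun t => g C - g (T t) with hd
  -- `d t ≤ #C * (d t - d (t + 1)) ≤ L * (d t - d (t + 1))`
  have hcontract : ∀ t < L, d (t + 1) ≤ (1 - 1 / L) * d t := by
    intro t ht
    have hround := hT.union_sub_le_card_mul hsub hmono C ht
    have hCT := hmono C (C ∪ T t) subset_union_left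
    have hstep : 0 ≤ g (T (t + 1)) - g (T t) := sub_nonneg.2 (hmono _ _ (hT.subset t.le_succ ht))
    have hcard : (#C : ℝ) * (g (T (t + 1)) - g (T t)) ≤ L * (g (T (t + 1)) - g (T t)) :=
      mul_le_mul_of_nonneg_right (by exact_mod_cast hC) hstep
    rw [hd, one_sub_div hL.ne', div_mul_eq_mul_div, le_div_iff₀ hL]
    nlinarith
  have hratio : 0 ≤ 1 - 1 / (L : ℝ) := sub_nonneg.2 ((div_le_one hL).2 (by exact_mod_cast hL))
  have hdecay : d L ≤ Real.exp (-1) * d 0 :=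
    (le_geom hratio L hcontract).trans (mul_le_mul_of_nonneg_right
      (Real.one_sub_div_pow_le_exp_neg (by exact_mod_cast hL)) (by simp only [hd]; linarith))
  simp only [hd] at hdecay
  linarith

end IsGreedyChain

theorem algorithm2_guarantee_general {V : Type*} [DecidableEq V]
    (m k l : ℕ)
    (f : Fin m → Finset V → ℝ)
    (hnonneg : ∀ i S, 0 ≤ f i S)
    (hsub : ∀ i, Submodular (f i)) (hmono : ∀ i, MonotoneSet (f i))
    (OPT : ℝ)
    (hOPT : IsGreatest {v : ℝ | ∃ (Str' : Finset V) (S' : Fin m → Finset V),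
      Str'.card ≤ l ∧ (∀ i, (S' i).card ≤ k - l) ∧
      v = ∑ i, f i (Str' ∪ S' i)} OPT)
    -- phase 1: greedy on each fᵢ
    (S : Fin m → ℕ → Finset V)
    (hSStep : ∀ i, ∀ t < k - l, ∃ e, e ∉ S i t ∧
      S i (t + 1) = insert e (S i t) ∧
      ∀ e', f i (insert e' (S i t)) - f i (S i t) ≤
        f i (insert e (S i t)) - f i (S i t))
    -- phase 2: greedy on the sum of marginals on top of the Sᵢ's
    (Str : ℕ → Finset V)
    (hStrStep : ∀ t < l, ∃ e, e ∉ Str t ∧ Str (t + 1) = insert e (Str t) ∧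
      ∀ e', (∑ i, (f i (insert e' (Str t) ∪ S i (k - l)) - f i (Str t ∪ S i (k - l)))) ≤
        ∑ i, (f i (insert e (Str t) ∪ S i (k - l)) - f i (Str t ∪ S i (k - l))))
    (γ : ℝ) (hγ : γ = ∑ i, f i (S i (k - l))) :
    max γ ((1 - 1 / Real.exp 1) * (OPT - 2 * γ) + γ) ≤
      ∑ i, f i (Str l ∪ S i (k - l)) := by
  set G : Finset V → ℝ := fun T => ∑ i, f i (T ∪ S i (k - l)) with hG
  have hGsub : Submodular G := Submodular.sum_s6 fun i => (hsub i).union_right _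
  have hGmono : MonotoneSet G := MonotoneSet.sum_s6 fun i => (hmono i).union_right _
  have hGreedy : IsGreedyChain G Str l := fun t ht => by
    obtain ⟨e, -, he, hmax⟩ := hStrStep t ht
    exact ⟨e, he, fun e' => by simpa only [hG, ← sum_sub_distrib] using hmax e'⟩
  have hG0 : γ ≤ G (Str 0) := by
    rw [hγ, hG]
    exact sum_le_sum fun i _ => hmono i _ _ subset_union_right
  obtain ⟨Str', S', hStr', hS', rfl⟩ := hOPT.1
  -- `fᵢ (T' ∪ S'ᵢ) + fᵢ Sᵢ ≤ fᵢ (T' ∪ Sᵢ) + fᵢ (S'ᵢ ∪ Sᵢ) ≤ fᵢ (T' ∪ Sᵢ) + 2 fᵢ Sᵢ`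
  have hOPT_le : ∑ i, f i (Str' ∪ S' i) ≤ G Str' + γ := by
    rw [hγ, hG, ← sum_add_distrib]
    refine sum_le_sum fun i _ => ?_
    have hsat := IsGreedyChain.union_sub_le_sub (fun t ht => (hSStep i t ht).imp fun _ h => h.2)
      (hsub i) (hmono i) (hS' i)
    have hsplit := (hsub i).add_le_union_add_union (hmono i) Str' (S' i) (S i (k - l))
    linarith [hnonneg i (S i 0)]
  have hgain := hGreedy.one_sub_exp_neg_one_mul_le hGsub hGmono hStr'
  have hexp : 0 ≤ 1 - Real.exp (-1) := sub_nonneg.2 (Real.exp_le_one_iff.2 (by norm_num))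
  have hGl : G (Str 0) ≤ G (Str l) := hGmono _ _ (hGreedy.subset l.zero_le le_rfl)
  refine max_le (hG0.trans hGl) ?_
  rw [one_div, ← Real.exp_neg]
  have hOPT_gap := mul_le_mul_of_nonneg_left (sub_le_sub_right hOPT_le (2 * γ)) hexp
  have hstart := mul_le_mul_of_nonneg_left hG0 (Real.exp_pos (-1)).le
  linarith

/-- Proposition 2: guarantee for Algorithm 2, which first builds
each `Sᵢ` greedily on `fᵢ` for `k - l` rounds, and then builds `S_tr` greedily
on `Σᵢ fᵢ(· ∪ Sᵢ)` for `l` rounds. -/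
theorem algorithm2_guarantee {V : Type*} [Fintype V] [DecidableEq V]
    (m k l : ℕ) (hlk : l ≤ k)
    (f : Fin m → Finset V → ℝ)
    (hnonneg : ∀ i S, 0 ≤ f i S)
    (hsub : ∀ i, Submodular (f i)) (hmono : ∀ i, MonotoneSet (f i))
    (OPT : ℝ)
    (hOPT : IsGreatest {v : ℝ | ∃ (Str' : Finset V) (S' : Fin m → Finset V),
      Str'.card ≤ l ∧ (∀ i, (S' i).card ≤ k - l) ∧
      v = ∑ i, f i (Str' ∪ S' i)} OPT)
    -- phase 1: greedy on each fᵢ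
    (S : Fin m → ℕ → Finset V) (hS0 : ∀ i, S i 0 = ∅)
    (hSStep : ∀ i, ∀ t < k - l, ∃ e, e ∉ S i t ∧
      S i (t + 1) = insert e (S i t) ∧
      ∀ e', f i (insert e' (S i t)) - f i (S i t) ≤
        f i (insert e (S i t)) - f i (S i t))
    -- phase 2: greedy on the sum of marginals on top of the Sᵢ's
    (Str : ℕ → Finset V) (hStr0 : Str 0 = ∅)
    (hStrStep : ∀ t < l, ∃ e, e ∉ Str t ∧ Str (t + 1) = insert e (Str t) ∧
      ∀ e', (∑ i, (f i (insert e' (Str t) ∪ S i (k - l)) - f i (Str t ∪ S i (k - l)))) ≤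
        ∑ i, (f i (insert e (Str t) ∪ S i (k - l)) - f i (Str t ∪ S i (k - l))))
    (γ : ℝ) (hγ : γ = ∑ i, f i (S i (k - l))) :
    max γ ((1 - 1 / Real.exp 1) * (OPT - 2 * γ) + γ) ≤
      ∑ i, f i (Str l ∪ S i (k - l)) :=
  algorithm2_guarantee_general m k l f hnonneg hsub hmono OPT hOPT S hSStep Str hStrStep γ hγ
end

section
/- Let f₁, ..., f_m : 2^V → ℝ≥0 be monotone submodular. At any state (S_tr, S₁, ..., S_m) of the randomized meta-greedy algorithm with |S_tr| < l and |Sᵢ| < k-l for all i, the following holds: (1/k) Σᵢ [fᵢ(S_tr* ∪ Sᵢ*) - fᵢ(S_tr ∪ Sᵢ)] ≤ (l/k) max_e Σᵢ Δᵢ(e | S_tr ∪ Sᵢ) + ((k-l)/k) Σᵢ max_e Δᵢ(e | S_tr ∪ Sᵢ), where S_tr* has size at most l and each Sᵢ* has size at most k-l, and Δᵢ(e|S) = fᵢ(S ∪ {e}) - fᵢ(S). -/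
/-!
For each `i`, monotonicity and submodularity bound the gap `fᵢ(S_tr* ∪ Sᵢ*) - fᵢ(S_tr ∪ Sᵢ)` by
the marginal gains at `S_tr ∪ Sᵢ` summed over `S_tr*` plus those summed over `Sᵢ*`. Summed over
`i`, the first part is at most `l` times the best gain of the sum `Σᵢ Δᵢ(e | S_tr ∪ Sᵢ)`, because
`S_tr*` is shared by all `i`; the second is at most `k - l` times the best gain of each `fᵢ`.
-/

open Finset

theorem Finset.sum_union_le_sum_add_sum {ι M : Type*} [DecidableEq ι] [AddCommMonoid M]
    [PartialOrder M] [IsOrderedAddMonoid M] {g : ι → M} (hg : ∀ x, 0 ≤ g x) (s t : Finset ι) :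
    ∑ x ∈ s ∪ t, g x ≤ ∑ x ∈ s, g x + ∑ x ∈ t, g x := by
  rw [← sum_union_inter]
  exact le_add_of_nonneg_right (sum_nonneg fun x _ => hg x)

theorem Finset.sum_le_card_mul_sup' {α R : Type*} [Fintype α] [Nonempty α] [Semiring R]
    [LinearOrder R] [IsOrderedRing R] {g : α → R} (hg : ∀ x, 0 ≤ g x) {s : Finset α} {n : ℕ}
    (hs : s.card ≤ n) :
    ∑ x ∈ s, g x ≤ n * univ.sup' univ_nonempty g := by
  have hsup : 0 ≤ univ.sup' univ_nonempty g :=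
    le_sup'_of_le g (mem_univ (Classical.arbitrary α)) (hg _)
  calc ∑ x ∈ s, g x ≤ s.card • univ.sup' univ_nonempty g :=
        sum_le_card_nsmul s g _ fun x _ => le_sup' g (mem_univ x)
    _ ≤ n * univ.sup' univ_nonempty g := by
        rw [nsmul_eq_mul]
        exact mul_le_mul_of_nonneg_right (Nat.mono_cast hs) hsup

section MarginalGain

variable {V : Type*} [DecidableEq V] {f : Finset V → ℝ}

def marginalGain (f : Finset V → ℝ) (S : Finset V) (e : V) : ℝ :=
  f (insert e S) - f S

theorem MonotoneSet.marginalGain_nonneg (hf : MonotoneSet f) (S : Finset V) (e : V) :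
    0 ≤ marginalGain f S e :=
  sub_nonneg.2 (hf _ _ (subset_insert e S))

theorem Submodular.le_add_sum_marginalGain (hf : Submodular f) (S T : Finset V) :
    f (S ∪ T) ≤ f S + ∑ e ∈ T, marginalGain f S e := by
  induction T using Finset.induction_on with
  | empty => simp
  | @insert a T ha ih =>
    have hunion : S ∪ insert a T = (S ∪ T) ∪ insert a S := by grind
    have hinter : (S ∪ T) ∩ insert a S = S := by grind
    have := hf (S ∪ T) (insert a S)
    rw [hinter, ← hunion] at this
    rw [sum_insert ha, marginalGain]
    linarith

theorem sub_le_sum_marginalGain_union (hsub : Submodular f) (hmono : MonotoneSet f)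
    (S A B : Finset V) :
    f (A ∪ B) - f S ≤ ∑ e ∈ A, marginalGain f S e + ∑ e ∈ B, marginalGain f S e :=
  calc f (A ∪ B) - f S ≤ f (S ∪ (A ∪ B)) - f S :=
        sub_le_sub_right (hmono _ _ subset_union_right) _
    _ ≤ ∑ e ∈ A ∪ B, marginalGain f S e := by
        linarith [hsub.le_add_sum_marginalGain S (A ∪ B)]
    _ ≤ _ := sum_union_le_sum_add_sum (hmono.marginalGain_nonneg S) A B

end MarginalGain

theorem randomized_step_inequality_general {V : Type*} [Fintype V] [DecidableEq V]
    [Nonempty V] (m k l : ℕ) (hlk : l < k)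
    (f : Fin m → Finset V → ℝ)
    (hsub : ∀ i, Submodular (f i)) (hmono : ∀ i, MonotoneSet (f i))
    (Str : Finset V) (S : Fin m → Finset V)
    (Strstar : Finset V) (hStrstar : Strstar.card ≤ l)
    (Sistar : Fin m → Finset V) (hSistar : ∀ i, (Sistar i).card ≤ k - l) :
    (1 / (k : ℝ)) * ∑ i, (f i (Strstar ∪ Sistar i) - f i (Str ∪ S i)) ≤
      ((l : ℝ) / k) *
        (Finset.univ.sup' Finset.univ_nonempty fun e =>
          ∑ i, (f i (insert e (Str ∪ S i)) - f i (Str ∪ S i))) +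
      (((k : ℝ) - l) / k) *
        ∑ i, (Finset.univ.sup' Finset.univ_nonempty fun e =>
          f i (insert e (Str ∪ S i)) - f i (Str ∪ S i)) := by
  set Δ : Fin m → V → ℝ := fun i => marginalGain (f i) (Str ∪ S i)
  have hΔ : ∀ i e, 0 ≤ Δ i e := fun i => (hmono i).marginalGain_nonneg _
  have hshared :
      ∑ i, ∑ e ∈ Strstar, Δ i e ≤ l * univ.sup' univ_nonempty fun e => ∑ i, Δ i e := by
    rw [sum_comm]
    exact sum_le_card_mul_sup' (fun e => sum_nonneg fun i _ => hΔ i e) hStrstar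
  have hown : ∀ i, ∑ e ∈ Sistar i, Δ i e ≤ ((k : ℝ) - l) * univ.sup' univ_nonempty (Δ i) := by
    intro i
    rw [← Nat.cast_sub hlk.le]
    exact sum_le_card_mul_sup' (hΔ i) (hSistar i)
  have hgap : ∑ i, (f i (Strstar ∪ Sistar i) - f i (Str ∪ S i)) ≤
      l * (univ.sup' univ_nonempty fun e => ∑ i, Δ i e) +
        ((k : ℝ) - l) * ∑ i, univ.sup' univ_nonempty (Δ i) :=
    calc ∑ i, (f i (Strstar ∪ Sistar i) - f i (Str ∪ S i))
        ≤ ∑ i, (∑ e ∈ Strstar, Δ i e + ∑ e ∈ Sistar i, Δ i e) :=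
          sum_le_sum fun i _ => sub_le_sum_marginalGain_union (hsub i) (hmono i) _ _ _
      _ ≤ _ := by
          rw [sum_add_distrib, mul_sum]
          exact add_le_add hshared (sum_le_sum fun i _ => hown i)
  calc _ ≤ (1 / (k : ℝ)) * (l * (univ.sup' univ_nonempty fun e => ∑ i, Δ i e) +
        ((k : ℝ) - l) * ∑ i, univ.sup' univ_nonempty (Δ i)) := by gcongr
    _ = _ := by simp only [Δ, marginalGain]; ring

/-- per-step expected-gain inequality of the randomized
meta-greedy algorithm (equations (53)-(55) of the paper). -/
theorem randomized_step_inequality {V : Type*} [Fintype V] [DecidableEq V]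
    [Nonempty V] (m k l : ℕ) (hl : 0 < l) (hlk : l < k)
    (f : Fin m → Finset V → ℝ)
    (hnonneg : ∀ i S, 0 ≤ f i S)
    (hsub : ∀ i, Submodular (f i)) (hmono : ∀ i, MonotoneSet (f i))
    (Str : Finset V) (S : Fin m → Finset V)
    (hStr : Str.card < l) (hS : ∀ i, (S i).card < k - l)
    (Strstar : Finset V) (hStrstar : Strstar.card ≤ l)
    (Sistar : Fin m → Finset V) (hSistar : ∀ i, (Sistar i).card ≤ k - l) :
    (1 / (k : ℝ)) * ∑ i, (f i (Strstar ∪ Sistar i) - f i (Str ∪ S i)) ≤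
      ((l : ℝ) / k) *
        (Finset.univ.sup' Finset.univ_nonempty fun e =>
          ∑ i, (f i (insert e (Str ∪ S i)) - f i (Str ∪ S i))) +
      (((k : ℝ) - l) / k) *
        ∑ i, (Finset.univ.sup' Finset.univ_nonempty fun e =>
          f i (insert e (Str ∪ S i)) - f i (Str ∪ S i)) :=
  randomized_step_inequality_general m k l hlk f hsub hmono Str S Strstar hStrstar Sistar hSistar
end
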